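/- arXiv:2310.20507 — 3 statements merged into one kernel-verified Lean document; each statement's English description precedes it below -/
import Mathlib

section
/- Let (X, μ) be a measure space and let v, η : X → ℝ be measurable functions with ∫ v² dμ < ∞ and ∫ η² dμ < ∞. Then the following two statements are equivalent: (i) v ≤ 0 holds μ-a.e. and for every measurable w : X → ℝ with ∫ w² dμ < ∞ and w ≤ 0 μ-a.e. one has ∫ η·(w − v) dμ ≤ 0; (ii) η ≥ 0 μ-a.e., v ≤ 0 μ-a.e., and η·v = 0 μ-a.e. -/
/-!
Testing (i) with `w = 0` and `w = 2v` gives `∫ η v = 0`, so (i) says `∫ η w ≤ 0` for every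
admissible `w`. The test function `w = min η 0` then gives `∫ (min η 0)² ≤ 0`, i.e. `η ≥ 0`
a.e.; as `η v ≤ 0` a.e. with vanishing integral, `η v = 0` a.e. Conversely, under (ii)
`∫ η (w - v) = ∫ η w ≤ 0`.
-/

open MeasureTheory

section

variable {X : Type*} [MeasurableSpace X] {μ : Measure X}

lemma ae_eq_zero_of_integral_nonpos {f : X → ℝ} (hf : 0 ≤ᵐ[μ] f) (hfi : Integrable f μ)
    (h : ∫ x, f x ∂μ ≤ 0) : f =ᵐ[μ] 0 :=
  (integral_eq_zero_iff_of_nonneg_ae hf hfi).1 (le_antisymm h (integral_nonneg_of_ae hf))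

lemma integral_mul_sub_of_memLp_two {η v w : X → ℝ} (hη : MemLp η 2 μ) (hv : MemLp v 2 μ)
    (hw : MemLp w 2 μ) :
    ∫ x, η x * (w x - v x) ∂μ = ∫ x, η x * w x ∂μ - ∫ x, η x * v x ∂μ := by
  simp_rw [mul_sub]
  exact integral_sub (hη.integrable_mul hw) (hη.integrable_mul hv)

lemma ae_nonneg_of_forall_integral_mul_nonpos {η : X → ℝ} (hη : Measurable η)
    (hη2 : MemLp η 2 μ)
    (h : ∀ w : X → ℝ, Measurable w → MemLp w 2 μ → (∀ᵐ x ∂μ, w x ≤ 0) →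
      ∫ x, η x * w x ∂μ ≤ 0) :
    ∀ᵐ x ∂μ, 0 ≤ η x := by
  have hm2 : MemLp (fun x => min (η x) 0) 2 μ := hη2.inf MemLp.zero
  have hprod_nonneg : ∀ x, 0 ≤ η x * min (η x) 0 := fun x => by
    rcases le_total (η x) 0 with hx | hx <;> simp [hx, mul_self_nonneg]
  have hprod_zero := ae_eq_zero_of_integral_nonpos (Filter.Eventually.of_forall hprod_nonneg)
    (hη2.integrable_mul hm2)
    (h _ (hη.min measurable_const) hm2 (Filter.Eventually.of_forall fun _ => min_le_right _ _))
  filter_upwards [hprod_zero] with x hx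
  by_contra! hneg
  rw [Pi.zero_apply, min_eq_left hneg.le, mul_self_eq_zero] at hx
  exact hneg.ne hx

lemma integral_mul_eq_zero_of_forall_integral_mul_le {η v : X → ℝ} (hv : Measurable v)
    (hv2 : MemLp v 2 μ) (hv_nonpos : ∀ᵐ x ∂μ, v x ≤ 0)
    (hvar : ∀ w : X → ℝ, Measurable w → MemLp w 2 μ → (∀ᵐ x ∂μ, w x ≤ 0) →
      ∫ x, η x * w x ∂μ ≤ ∫ x, η x * v x ∂μ) :
    ∫ x, η x * v x ∂μ = 0 := by
  have hint_nonneg : 0 ≤ ∫ x, η x * v x ∂μ := by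
    simpa using hvar 0 measurable_const MemLp.zero (Filter.Eventually.of_forall fun _ => le_rfl)
  have hint_nonpos : ∫ x, η x * v x ∂μ ≤ 0 := by
    have h2v := hvar (fun x => 2 * v x) (hv.const_mul 2) (hv2.const_mul 2)
      (by filter_upwards [hv_nonpos] with x hx; linarith)
    simp_rw [mul_left_comm _ (2 : ℝ), integral_const_mul] at h2v
    linarith
  exact le_antisymm hint_nonpos hint_nonneg

lemma ae_mul_eq_zero_of_integral_mul_eq_zero {η v : X → ℝ} (hη_nonneg : ∀ᵐ x ∂μ, 0 ≤ η x)
    (hv_nonpos : ∀ᵐ x ∂μ, v x ≤ 0) (hint : Integrable (fun x => η x * v x) μ)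
    (hzero : ∫ x, η x * v x ∂μ = 0) :
    ∀ᵐ x ∂μ, η x * v x = 0 := by
  have hneg_zero := ae_eq_zero_of_integral_nonpos (f := fun x => -(η x * v x))
    (by filter_upwards [hη_nonneg, hv_nonpos] with x h1 h2
        exact neg_nonneg.2 (mul_nonpos_of_nonneg_of_nonpos h1 h2))
    hint.neg (by rw [integral_neg, hzero, neg_zero])
  filter_upwards [hneg_zero] with x hx
  exact neg_eq_zero.1 hx

end

/-- Pointwise characterization of the subdifferential in `L²(μ)` of the constraint
functional `ψ(v) = 0` if `v ≤ 0` a.e., `+∞` otherwise. -/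
theorem stmt2 {X : Type*} [MeasurableSpace X] (μ : Measure X)
    (v η : X → ℝ) (hv : Measurable v) (hη : Measurable η)
    (hv2 : MemLp v 2 μ) (hη2 : MemLp η 2 μ) :
    ((∀ᵐ x ∂μ, v x ≤ 0) ∧
      ∀ w : X → ℝ, Measurable w → MemLp w 2 μ → (∀ᵐ x ∂μ, w x ≤ 0) →
        ∫ x, η x * (w x - v x) ∂μ ≤ 0) ↔
    ((∀ᵐ x ∂μ, 0 ≤ η x) ∧ (∀ᵐ x ∂μ, v x ≤ 0) ∧ (∀ᵐ x ∂μ, η x * v x = 0)) := by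
  constructor
  · rintro ⟨hv_nonpos, hsub⟩
    have hvar : ∀ w : X → ℝ, Measurable w → MemLp w 2 μ → (∀ᵐ x ∂μ, w x ≤ 0) →
        ∫ x, η x * w x ∂μ ≤ ∫ x, η x * v x ∂μ := fun w hw hw2 hw_nonpos => by
      rw [← sub_nonpos, ← integral_mul_sub_of_memLp_two hη2 hv2 hw2]
      exact hsub w hw hw2 hw_nonpos
    have hzero := integral_mul_eq_zero_of_forall_integral_mul_le hv hv2 hv_nonpos hvar
    have hη_nonneg := ae_nonneg_of_forall_integral_mul_nonpos hη hη2
      fun w hw hw2 hw_nonpos => (hvar w hw hw2 hw_nonpos).trans hzero.le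
    exact ⟨hη_nonneg, hv_nonpos, ae_mul_eq_zero_of_integral_mul_eq_zero hη_nonneg hv_nonpos
      (hη2.integrable_mul hv2) hzero⟩
  · rintro ⟨hη_nonneg, hv_nonpos, hprod_zero⟩
    refine ⟨hv_nonpos, fun w _ hw2 hw_nonpos => ?_⟩
    rw [integral_mul_sub_of_memLp_two hη2 hv2 hw2, integral_eq_zero_of_ae hprod_zero, sub_zero]
    refine integral_nonpos_of_ae ?_
    filter_upwards [hη_nonneg, hw_nonpos] with x h1 h2
    exact mul_nonpos_of_nonneg_of_nonpos h1 h2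
end

section
/- Let B be a real Banach space, T > 0, m ∈ ℕ with m ≥ 1, τ := T/m and t_k := k·τ for k = 0, …, m. Let g : [0,T] → B be Bochner integrable and let f : [0,T] → B satisfy f(t) = f(0) + ∫₀ᵗ g(s) ds for all t ∈ [0,T]. Define f_k := (1/τ)·∫_{t_{k−1}}^{t_k} f(s) ds for k = 1, …, m and f₀ := f(0). Then ‖f₁ − f₀‖_B ≤ ∫₀^{τ} ‖g(r)‖_B dr, and for every k with 2 ≤ k ≤ m, ‖f_k − f_{k−1}‖_B ≤ ∫_{t_{k−2}}^{t_k} ‖g(r)‖_B dr. -/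
/-!
Each local average `f_k` is an average of values of `f` over `[t_{k-1}, t_k]`, and `f` varies
on that interval by at most `∫_{t_{k-1}}^{t_k} ‖g‖`. Hence `f_k` lies within that distance of
`f(t_{k-1})`, and comparing `f_k` and `f_{k-1}` through the common node `t_{k-1}` gives the
bound over `[t_{k-2}, t_k]`; for `k = 1` one compares with `f₀ = f(0)` directly.
-/

open MeasureTheory intervalIntegral Set

section

variable {B : Type*} [NormedAddCommGroup B] [NormedSpace ℝ B]

def IsPrimitiveOn (f g : ℝ → B) (s : Set ℝ) : Prop :=
  ∀ x ∈ s, ∀ y ∈ s, f y - f x = ∫ r in x..y, g r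

theorem IsPrimitiveOn.mono {f g : ℝ → B} {s t : Set ℝ} (hf : IsPrimitiveOn f g t) (hst : s ⊆ t) :
    IsPrimitiveOn f g s :=
  fun x hx y hy => hf x (hst hx) y (hst hy)

theorem isPrimitiveOn_of_eq_add_integral {f g : ℝ → B} {a b : ℝ}
    (hg : IntegrableOn g (Icc a b)) (hf : ∀ t ∈ Icc a b, f t = f a + ∫ r in a..t, g r) :
    IsPrimitiveOn f g (Icc a b) := by
  have hgI : ∀ t ∈ Icc a b, IntervalIntegrable g volume a t := fun t ht =>
    (intervalIntegrable_iff_integrableOn_Icc_of_le ht.1).2 (hg.mono_set (Icc_subset_Icc_right ht.2))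
  intro s hs t ht
  rw [hf t ht, hf s hs, add_sub_add_left_eq_sub, integral_interval_sub_left (hgI t ht) (hgI s hs)]

theorem IsPrimitiveOn.intervalIntegrable {f g : ℝ → B} {a b : ℝ}
    (hf : IsPrimitiveOn f g (Icc a b)) (hab : a ≤ b) (hg : IntegrableOn g (Icc a b)) :
    IntervalIntegrable f volume a b := by
  have hprim : ContinuousOn (fun t => ∫ r in a..t, g r) (Icc a b) := by
    have := continuousOn_primitive_interval (μ := volume) (f := g) (a := a) (b := b)
      (by rwa [uIcc_of_le hab])
    rwa [uIcc_of_le hab] at this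
  refine ContinuousOn.intervalIntegrable_of_Icc hab
    ((continuousOn_const (c := f a)).add hprim |>.congr ?_)
  intro t ht
  rw [Pi.add_apply, ← hf a ⟨le_rfl, hab⟩ t ht, add_sub_cancel]

theorem norm_intervalIntegral_le_of_mem_Icc {g : ℝ → B} {a b c s : ℝ}
    (hg : IntervalIntegrable g volume a b) (hc : c ∈ Icc a b) (hs : s ∈ Icc a b) :
    ‖∫ r in c..s, g r‖ ≤ ∫ r in a..b, ‖g r‖ := by
  have hab : a ≤ b := hc.1.trans hc.2
  calc ‖∫ r in c..s, g r‖ ≤ |∫ r in c..s, ‖g r‖| := norm_integral_le_abs_integral_norm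
    _ ≤ |∫ r in a..b, ‖g r‖| := by
      refine abs_integral_mono_interval ?_ (.of_forall fun _ => norm_nonneg _) hg.norm
      rw [uIoc_of_le hab]
      exact Ioc_subset_Ioc (le_inf hc.1 hs.1) (sup_le hc.2 hs.2)
    _ = ∫ r in a..b, ‖g r‖ := abs_of_nonneg (integral_nonneg hab fun _ _ => norm_nonneg _)

variable [CompleteSpace B]

theorem norm_average_sub_le_of_forall_norm_sub_le {f : ℝ → B} {a b C : ℝ} {v : B}
    (hab : a < b) (hf : IntervalIntegrable f volume a b) (hC : ∀ s ∈ Ioc a b, ‖f s - v‖ ≤ C) :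
    ‖(1 / (b - a)) • (∫ s in a..b, f s) - v‖ ≤ C := by
  have hba : 0 < b - a := sub_pos.2 hab
  have hbound : ‖∫ s in a..b, (f s - v)‖ ≤ C * (b - a) := by
    have := norm_integral_le_of_norm_le_const (a := a) (b := b) (by rwa [uIoc_of_le hab.le])
    rwa [abs_of_pos hba] at this
  have hmean : (1 / (b - a)) • (∫ s in a..b, f s) - v = (1 / (b - a)) • ∫ s in a..b, (f s - v) := by
    rw [integral_sub hf intervalIntegrable_const, intervalIntegral.integral_const, smul_sub,
      smul_smul, one_div_mul_cancel hba.ne', one_smul]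
  calc ‖(1 / (b - a)) • (∫ s in a..b, f s) - v‖ = 1 / (b - a) * ‖∫ s in a..b, (f s - v)‖ := by
        rw [hmean, norm_smul, Real.norm_of_nonneg (by positivity)]
    _ ≤ 1 / (b - a) * (C * (b - a)) := by gcongr
    _ = C := by field_simp

theorem norm_average_sub_le_integral_norm {f g : ℝ → B} {a b c : ℝ} (hab : a < b)
    (hg : IntegrableOn g (Icc a b))
    (hf : IsPrimitiveOn f g (Icc a b)) (hc : c ∈ Icc a b) :
    ‖(1 / (b - a)) • (∫ s in a..b, f s) - f c‖ ≤ ∫ r in a..b, ‖g r‖ := by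
  refine norm_average_sub_le_of_forall_norm_sub_le hab
    (hf.intervalIntegrable hab.le hg) fun s hs => ?_
  rw [hf c hc s (Ioc_subset_Icc_self hs)]
  exact norm_intervalIntegral_le_of_mem_Icc
    ((intervalIntegrable_iff_integrableOn_Icc_of_le hab.le).2 hg) hc (Ioc_subset_Icc_self hs)

theorem norm_average_sub_average_le_integral_norm {f g : ℝ → B} {a b c : ℝ} (hab : a < b)
    (hbc : b < c) (hg : IntegrableOn g (Icc a c))
    (hf : IsPrimitiveOn f g (Icc a c)) :
    ‖(1 / (c - b)) • (∫ s in b..c, f s) - (1 / (b - a)) • ∫ s in a..b, f s‖ ≤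
      ∫ r in a..c, ‖g r‖ := by
  have hleft : Icc a b ⊆ Icc a c := Icc_subset_Icc_right hbc.le
  have hright : Icc b c ⊆ Icc a c := Icc_subset_Icc_left hab.le
  have hgI : ∀ {u v}, Icc u v ⊆ Icc a c → u ≤ v → IntervalIntegrable (‖g ·‖) volume u v :=
    fun hsub huv => (intervalIntegrable_iff_integrableOn_Icc_of_le huv).2 (hg.mono_set hsub).norm
  calc _ ≤ ‖(1 / (c - b)) • (∫ s in b..c, f s) - f b‖ + ‖f b - (1 / (b - a)) • ∫ s in a..b, f s‖ :=
        norm_sub_le_norm_sub_add_norm_sub _ _ _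
    _ ≤ (∫ r in b..c, ‖g r‖) + ∫ r in a..b, ‖g r‖ := by
      rw [norm_sub_rev (f b)]
      gcongr
      · exact norm_average_sub_le_integral_norm hbc (hg.mono_set hright)
          (hf.mono hright) ⟨le_rfl, hbc.le⟩
      · exact norm_average_sub_le_integral_norm hab (hg.mono_set hleft)
          (hf.mono hleft) ⟨hab.le, le_rfl⟩
    _ = ∫ r in a..c, ‖g r‖ := by
      rw [add_comm, integral_add_adjacent_intervals (hgI hleft hab.le) (hgI hright hbc.le)]

end

/-- Estimates on the differences of local averages `f_k` of `f` over the uniform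
partition of `[0,T]`, where `f` is the indefinite Bochner integral of `g`. -/
theorem stmt8 {B : Type*} [NormedAddCommGroup B] [NormedSpace ℝ B] [CompleteSpace B]
    (T : ℝ) (hT : 0 < T) (m : ℕ) (hm : 1 ≤ m) (g f : ℝ → B)
    (hg : IntegrableOn g (Set.Icc 0 T))
    (hf : ∀ t ∈ Set.Icc (0 : ℝ) T, f t = f 0 + ∫ s in (0 : ℝ)..t, g s) :
    let τ : ℝ := T / m
    let fk : ℕ → B := fun k =>
      if k = 0 then f 0 else (1 / τ) • ∫ s in (((k : ℝ) - 1) * τ)..((k : ℝ) * τ), f s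
    (‖fk 1 - fk 0‖ ≤ ∫ r in (0 : ℝ)..τ, ‖g r‖) ∧
      ∀ k : ℕ, 2 ≤ k → k ≤ m →
        ‖fk k - fk (k - 1)‖ ≤ ∫ r in (((k : ℝ) - 2) * τ)..((k : ℝ) * τ), ‖g r‖ := by
  intro τ fk
  have hτ : 0 < τ := div_pos hT (by exact_mod_cast hm)
  have hnode : ∀ j : ℕ, j ≤ m → (j : ℝ) * τ ≤ T := fun j hj =>
    calc (j : ℝ) * τ ≤ m * τ := by gcongr
      _ = T := mul_div_cancel₀ T (by positivity)
  have hfg := isPrimitiveOn_of_eq_add_integral hg hf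
  have hloc : ∀ a b, 0 ≤ a → b ≤ T → IntegrableOn g (Icc a b) ∧ IsPrimitiveOn f g (Icc a b) :=
    fun a b ha hb => ⟨hg.mono_set (Icc_subset_Icc ha hb), hfg.mono (Icc_subset_Icc ha hb)⟩
  refine ⟨?_, fun k hk2 hkm => ?_⟩
  · obtain ⟨hg₁, hf₁⟩ := hloc 0 τ le_rfl (by simpa using hnode 1 hm)
    simpa [fk] using norm_average_sub_le_integral_norm hτ hg₁ hf₁ ⟨le_rfl, hτ.le⟩
  · have hk : (2 : ℝ) ≤ k := by exact_mod_cast hk2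
    obtain ⟨hgk, hfk⟩ := hloc ((k - 2) * τ) (k * τ) (by nlinarith) (hnode k hkm)
    have := norm_average_sub_average_le_integral_norm (b := (k - 1) * τ) (by nlinarith)
      (by nlinarith) hgk hfk
    have hcast : ((k - 1 : ℕ) : ℝ) = k - 1 := by rw [Nat.cast_sub (by omega), Nat.cast_one]
    simp only [fk, if_neg (show k ≠ 0 by omega), if_neg (show k - 1 ≠ 0 by omega), hcast]
    convert this using 5 <;> ring
end

section
/- Let B be a real Banach space, 1 ≤ p < ∞, T > 0, m ∈ ℕ with m ≥ 1, τ := T/m and t_k := k·τ for k = 0, …, m. Let g : [0,T] → B be Bochner integrable with ∫₀^T ‖g(t)‖_B^p dt < ∞, and let f : [0,T] → B satisfy f(t) = f(0) + ∫₀ᵗ g(s) ds for all t ∈ [0,T]. Define f_k := (1/τ)·∫_{t_{k−1}}^{t_k} f(s) ds for k = 1, …, m and f₀ := f(0). Then τ·Σ_{k=1}^m ‖(f_k − f_{k−1})/τ‖_B^p ≤ 2^p·∫₀^T ‖g(t)‖_B^p dt. -/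
/-!
Write `t_k = kτ`. For `k ≥ 2`, `f_k - f_{k-1}` is the average over `[t_{k-1}, t_k]` of
`f s - f (s - τ) = ∫_{s-τ}^s g`, and for `k = 1` it is the average over `[0, τ]` of
`f s - f 0 = ∫_0^s g`; either way `‖f_k - f_{k-1}‖ ≤ ∫ ‖g‖` over the window `[t_{k-2}, t_k]`
(with `t_{-1} := 0`), which has length at most `2τ`. Jensen's inequality turns this
into `‖(f_k - f_{k-1})/τ‖^p ≤ 2^(p-1) τ⁻¹ ∫ ‖g‖^p` over the window, and since every point of
`[0, T]` lies in at most two windows, summing gives the factor `2^(p-1) · 2 = 2^p`.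
-/

open MeasureTheory intervalIntegral Set

theorem rpow_intervalIntegral_le_mul_intervalIntegral_rpow {h : ℝ → ℝ} {a b p : ℝ} (hp : 1 ≤ p)
    (hab : a < b) (hh : ∀ t, 0 ≤ h t) (hi : IntegrableOn h (Ioc a b))
    (hip : IntegrableOn (fun t => h t ^ p) (Ioc a b)) :
    (∫ t in a..b, h t) ^ p ≤ (b - a) ^ (p - 1) * ∫ t in a..b, h t ^ p := by
  have hba : 0 < b - a := sub_pos.2 hab
  have jensen := (convexOn_rpow hp).map_set_average_le
    (Real.continuous_rpow_const (by linarith)).continuousOn isClosed_Ici (by simp [hab])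
    measure_Ioc_lt_top.ne (ae_of_all _ fun t => hh t) hi hip
  simp only [setAverage_eq, Real.volume_real_Ioc_of_le hab.le, ← integral_of_le hab.le,
    smul_eq_mul] at jensen
  rw [Real.mul_rpow (inv_nonneg.2 hba.le) (integral_nonneg hab.le fun t _ => hh t),
    Real.inv_rpow hba.le] at jensen
  calc (∫ t in a..b, h t) ^ p = (b - a) ^ p * (((b - a) ^ p)⁻¹ * (∫ t in a..b, h t) ^ p) := by
        field_simp
    _ ≤ (b - a) ^ p * ((b - a)⁻¹ * ∫ t in a..b, h t ^ p) := by gcongr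
    _ = (b - a) ^ (p - 1) * ∫ t in a..b, h t ^ p := by
        rw [Real.rpow_sub_one hba.ne']; ring

theorem Finset.sum_Icc_one_eq_sum_range {M : Type*} [AddCommMonoid M] (F : ℕ → M) (m : ℕ) :
    ∑ k ∈ Finset.Icc 1 m, F k = ∑ j ∈ Finset.range m, F (j + 1) := by
  rw [Finset.range_eq_Ico, Finset.sum_Ico_add', zero_add, Finset.Ico_add_one_right_eq_Icc]

-- `j - 1` is truncated, so the window of `j = 0` is `[0, τ]`.
theorem sum_intervalIntegral_window_le {h : ℝ → ℝ} (hh : ∀ t, 0 ≤ h t) {τ : ℝ} (hτ : 0 ≤ τ)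
    (n : ℕ) (hi : IntegrableOn h (Icc 0 (n * τ))) :
    ∑ j ∈ Finset.range n, ∫ t in ((j - 1 : ℕ) : ℝ) * τ..((j + 1 : ℕ) : ℝ) * τ, h t ≤
      2 * ∫ t in (0 : ℝ)..n * τ, h t := by
  have hii : ∀ j k : ℕ, j ≤ n → k ≤ n → IntervalIntegrable h volume (j * τ) (k * τ) :=
    fun j k hj hk => (hi.mono_set (uIcc_subset_Icc
      ⟨by positivity, by gcongr⟩
      ⟨by positivity, by gcongr⟩)).intervalIntegrable
  have hsplit : ∀ j ∈ Finset.range n, ∫ t in ((j - 1 : ℕ) : ℝ) * τ..((j + 1 : ℕ) : ℝ) * τ, h t =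
      (∫ t in ((j - 1 : ℕ) : ℝ) * τ..(j : ℝ) * τ, h t) +
        ∫ t in (j : ℝ) * τ..((j + 1 : ℕ) : ℝ) * τ, h t := by
    intro j hj
    have hj := Finset.mem_range.1 hj
    rcases j with _ | j
    · simp
    · rw [Nat.add_sub_cancel, integral_add_adjacent_intervals (hii _ _ (by omega) (by omega))
        (hii _ _ (by omega) hj)]
  have hlower : ∑ j ∈ Finset.range n, ∫ t in ((j - 1 : ℕ) : ℝ) * τ..(j : ℝ) * τ, h t ≤
      ∫ t in (0 : ℝ)..n * τ, h t := by
    have hsum := sum_integral_adjacent_intervals (a := fun j : ℕ => ((j - 1 : ℕ) : ℝ) * τ)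
      (f := h) (μ := volume) (n := n) fun j hj => by simpa using hii (j - 1) j (by omega) hj.le
    simp only [Nat.add_sub_cancel, Nat.zero_sub, CharP.cast_eq_zero, zero_mul] at hsum
    rw [hsum]
    exact integral_mono_interval le_rfl (by positivity) (by gcongr; omega)
      (ae_of_all _ fun t => hh t) (by simpa using hii 0 n n.zero_le le_rfl)
  have hupper : ∑ j ∈ Finset.range n, ∫ t in (j : ℝ) * τ..((j + 1 : ℕ) : ℝ) * τ, h t =
      ∫ t in (0 : ℝ)..n * τ, h t := by
    rw [sum_integral_adjacent_intervals fun j hj => hii _ _ hj.le hj]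
    simp
  rw [Finset.sum_congr rfl hsplit, Finset.sum_add_distrib, hupper, two_mul]
  gcongr

section Primitive

variable {B : Type*} [NormedAddCommGroup B] [NormedSpace ℝ B] {f g : ℝ → B} {T : ℝ}

theorem continuousOn_of_eq_add_primitive (hg : IntegrableOn g (Icc 0 T))
    (hf : ∀ t ∈ Icc (0 : ℝ) T, f t = f 0 + ∫ s in (0 : ℝ)..t, g s) :
    ContinuousOn f (Icc 0 T) := by
  rcases le_or_gt 0 T with hT | hT
  · have hprim := continuousOn_primitive_interval (a := 0) (b := T) (μ := volume)
      (by rwa [uIcc_of_le hT])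
    rw [uIcc_of_le hT] at hprim
    exact (continuousOn_const.add hprim).congr hf
  · simp [Icc_eq_empty_of_lt hT]

theorem norm_sub_le_integral_norm_of_eq_add_primitive (hg : IntegrableOn g (Icc 0 T))
    (hf : ∀ t ∈ Icc (0 : ℝ) T, f t = f 0 + ∫ s in (0 : ℝ)..t, g s) {a b x y : ℝ}
    (ha : 0 ≤ a) (hax : a ≤ x) (hxy : x ≤ y) (hyb : y ≤ b) (hb : b ≤ T) :
    ‖f y - f x‖ ≤ ∫ t in a..b, ‖g t‖ := by
  have hmem : ∀ t, a ≤ t → t ≤ b → t ∈ Icc (0 : ℝ) T := fun t h₁ h₂ => ⟨ha.trans h₁, h₂.trans hb⟩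
  have hgi : ∀ t ∈ Icc (0 : ℝ) T, IntervalIntegrable g volume 0 t := fun t ht =>
    (hg.mono_set (uIcc_subset_Icc ⟨le_rfl, ht.1.trans ht.2⟩ ht)).intervalIntegrable
  have hy := hmem y (hax.trans hxy) hyb
  have hx := hmem x hax (hxy.trans hyb)
  calc ‖f y - f x‖ = ‖∫ t in x..y, g t‖ := by
        rw [hf y hy, hf x hx, add_sub_add_left_eq_sub,
          integral_interval_sub_left (hgi y hy) (hgi x hx)]
    _ ≤ ∫ t in x..y, ‖g t‖ := norm_integral_le_integral_norm hxy
    _ ≤ ∫ t in a..b, ‖g t‖ :=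
        integral_mono_interval hax hxy hyb (ae_of_all _ fun t => norm_nonneg _)
          (hg.mono_set (uIcc_subset_Icc (hmem a le_rfl (hax.trans (hxy.trans hyb)))
            (hmem b ((hax.trans hxy).trans hyb) le_rfl))).intervalIntegrable.norm

theorem norm_smul_intervalIntegral_le {F : ℝ → B} {a τ C : ℝ} (hτ : 0 < τ)
    (hF : ∀ s ∈ Ioc a (a + τ), ‖F s‖ ≤ C) : ‖(1 / τ) • ∫ s in a..a + τ, F s‖ ≤ C := by
  have hint := norm_integral_le_of_norm_le_const
    (by rwa [uIoc_of_le (by linarith)] : ∀ s ∈ uIoc a (a + τ), ‖F s‖ ≤ C)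
  rw [add_sub_cancel_left, abs_of_pos hτ] at hint
  calc ‖(1 / τ) • ∫ s in a..a + τ, F s‖ ≤ 1 / τ * (C * τ) := by
        rw [norm_smul, Real.norm_of_nonneg (by positivity)]; gcongr
    _ = C := by field_simp

-- The paper's `f_k`.
noncomputable def localAverage (f : ℝ → B) (τ : ℝ) (k : ℕ) : B :=
  if k = 0 then f 0 else (1 / τ) • ∫ s in ((k : ℝ) - 1) * τ..(k : ℝ) * τ, f s

theorem localAverage_zero (τ : ℝ) : localAverage f τ 0 = f 0 := if_pos rfl

theorem localAverage_succ (τ : ℝ) (j : ℕ) :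
    localAverage f τ (j + 1) = (1 / τ) • ∫ s in (j : ℝ) * τ..j * τ + τ, f s := by
  rw [localAverage, if_neg j.succ_ne_zero]
  congr 2 <;> push_cast <;> ring

theorem norm_localAverage_succ_sub_le [CompleteSpace B] (hg : IntegrableOn g (Icc 0 T))
    (hf : ∀ t ∈ Icc (0 : ℝ) T, f t = f 0 + ∫ s in (0 : ℝ)..t, g s) {τ : ℝ} (hτ : 0 < τ) (j : ℕ)
    (hj : ((j + 1 : ℕ) : ℝ) * τ ≤ T) :
    ‖localAverage f τ (j + 1) - localAverage f τ j‖ ≤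
      ∫ t in ((j - 1 : ℕ) : ℝ) * τ..((j + 1 : ℕ) : ℝ) * τ, ‖g t‖ := by
  have hfi : ∀ a b, 0 ≤ a → a ≤ b → b ≤ T → IntervalIntegrable f volume a b :=
    fun a b ha hab hb => ((continuousOn_of_eq_add_primitive hg hf).mono
      (Icc_subset_Icc ha hb)).intervalIntegrable_of_Icc hab
  cases j with
  | zero =>
    simp only [CharP.cast_eq_zero, zero_mul, zero_add, Nat.zero_sub, Nat.cast_one, one_mul]
      at hj ⊢
    have hdiff :
        localAverage f τ 1 - localAverage f τ 0 = (1 / τ) • ∫ s in 0..τ, (f s - f 0) := by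
      rw [localAverage_zero, ← zero_add 1, localAverage_succ]
      simp only [CharP.cast_eq_zero, zero_mul, zero_add]
      rw [integral_sub (hfi 0 τ le_rfl hτ.le hj) intervalIntegrable_const,
        intervalIntegral.integral_const, smul_sub, smul_smul, sub_zero, one_div,
        inv_mul_cancel₀ hτ.ne', one_smul]
    have hbound := norm_smul_intervalIntegral_le (a := 0) hτ fun s hs =>
      norm_sub_le_integral_norm_of_eq_add_primitive hg hf le_rfl le_rfl hs.1.le hs.2
        (by rwa [zero_add])
    rwa [zero_add, ← hdiff] at hbound
  | succ i =>
    have ha : 0 ≤ (i : ℝ) * τ := by positivity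
    have hcast₁ : ((i + 1 : ℕ) : ℝ) * τ = (i : ℝ) * τ + τ := by push_cast; ring
    have hcast₂ : ((i + 1 + 1 : ℕ) : ℝ) * τ = (i : ℝ) * τ + τ + τ := by push_cast; ring
    rw [hcast₂] at hj
    rw [Nat.add_sub_cancel, hcast₂]
    have hshift : ∫ s in (i : ℝ) * τ..(i : ℝ) * τ + τ, f s
        = ∫ s in (i : ℝ) * τ + τ..(i : ℝ) * τ + τ + τ, f (s - τ) := by
      rw [integral_comp_sub_right]; simp only [add_sub_cancel_right]
    have hdiff : localAverage f τ (i + 1 + 1) - localAverage f τ (i + 1)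
        = (1 / τ) • ∫ s in (i : ℝ) * τ + τ..(i : ℝ) * τ + τ + τ, (f s - f (s - τ)) := by
      rw [localAverage_succ, localAverage_succ, hcast₁, hshift, ← smul_sub,
        intervalIntegral.integral_sub]
      · exact hfi _ _ (by positivity) (by linarith) hj
      · simpa using (hfi _ _ ha (by linarith) (by linarith)).comp_sub_right τ
    rw [hdiff]
    exact norm_smul_intervalIntegral_le hτ fun s hs =>
      norm_sub_le_integral_norm_of_eq_add_primitive hg hf ha (by linarith [hs.1]) (by linarith)
        hs.2 hj

theorem rpow_norm_smul_localAverage_succ_sub_le [CompleteSpace B] {p : ℝ} (hp : 1 ≤ p)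
    (hg : IntegrableOn g (Icc 0 T)) (hgp : IntegrableOn (fun t => ‖g t‖ ^ p) (Icc 0 T))
    (hf : ∀ t ∈ Icc (0 : ℝ) T, f t = f 0 + ∫ s in (0 : ℝ)..t, g s) {τ : ℝ} (hτ : 0 < τ) (j : ℕ)
    (hj : ((j + 1 : ℕ) : ℝ) * τ ≤ T) :
    ‖(1 / τ) • (localAverage f τ (j + 1) - localAverage f τ j)‖ ^ p ≤
      2 ^ (p - 1) * (1 / τ * ∫ t in ((j - 1 : ℕ) : ℝ) * τ..((j + 1 : ℕ) : ℝ) * τ, ‖g t‖ ^ p) := by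
  set a : ℝ := ((j - 1 : ℕ) : ℝ) * τ
  set b : ℝ := ((j + 1 : ℕ) : ℝ) * τ
  have hab : a < b := by simp only [a, b]; gcongr; omega
  have hba : b - a ≤ 2 * τ := by
    have : ((j + 1 : ℕ) : ℝ) ≤ ((j - 1 : ℕ) : ℝ) + 2 := by
      exact_mod_cast (by omega : j + 1 ≤ j - 1 + 2)
    simp only [a, b]; nlinarith
  have hsub : Ioc a b ⊆ Icc 0 T := Ioc_subset_Icc_self.trans (Icc_subset_Icc (by positivity) hj)
  have hjensen := rpow_intervalIntegral_le_mul_intervalIntegral_rpow hp hab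
    (fun t => norm_nonneg (g t)) (IntegrableOn.mono_set hg.norm hsub) (hgp.mono_set hsub)
  have hI : 0 ≤ ∫ t in a..b, ‖g t‖ := integral_nonneg hab.le fun t _ => norm_nonneg _
  have hJ : 0 ≤ ∫ t in a..b, ‖g t‖ ^ p := integral_nonneg hab.le fun t _ => by positivity
  calc ‖(1 / τ) • (localAverage f τ (j + 1) - localAverage f τ j)‖ ^ p
      ≤ (1 / τ * ∫ t in a..b, ‖g t‖) ^ p := by
        rw [norm_smul, Real.norm_of_nonneg (by positivity)]
        gcongr
        exact norm_localAverage_succ_sub_le hg hf hτ j hj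
    _ = (1 / τ) ^ p * (∫ t in a..b, ‖g t‖) ^ p := Real.mul_rpow (by positivity) hI
    _ ≤ (1 / τ) ^ p * ((2 * τ) ^ (p - 1) * ∫ t in a..b, ‖g t‖ ^ p) := by
        gcongr
        refine hjensen.trans ?_
        gcongr
    _ = 2 ^ (p - 1) * (1 / τ * ∫ t in a..b, ‖g t‖ ^ p) := by
        rw [Real.mul_rpow zero_le_two hτ.le, one_div, Real.inv_rpow hτ.le,
          Real.rpow_sub_one hτ.ne']
        field_simp

end Primitive

/-- Proposition A.1: `L^p` estimate for the difference quotients of the local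
averages `f_k` of `f`, where `f` is the indefinite Bochner integral of `g` and
`‖g‖_B ∈ L^p(0,T)`. -/
theorem stmt9 {B : Type*} [NormedAddCommGroup B] [NormedSpace ℝ B] [CompleteSpace B]
    (p : ℝ) (hp : 1 ≤ p) (T : ℝ) (hT : 0 < T) (m : ℕ) (hm : 1 ≤ m) (g f : ℝ → B)
    (hg : IntegrableOn g (Set.Icc 0 T))
    (hgp : IntegrableOn (fun t => ‖g t‖ ^ p) (Set.Icc 0 T))
    (hf : ∀ t ∈ Set.Icc (0 : ℝ) T, f t = f 0 + ∫ s in (0 : ℝ)..t, g s) :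
    let τ : ℝ := T / m
    let fk : ℕ → B := fun k =>
      if k = 0 then f 0 else (1 / τ) • ∫ s in (((k : ℝ) - 1) * τ)..((k : ℝ) * τ), f s
    τ * ∑ k ∈ Finset.Icc 1 m, ‖(1 / τ) • (fk k - fk (k - 1))‖ ^ p ≤
      (2 : ℝ) ^ p * ∫ t in (0 : ℝ)..T, ‖g t‖ ^ p := by
  intro τ fk
  have hτ : 0 < τ := div_pos hT (by exact_mod_cast hm)
  have hmτ : (m : ℝ) * τ = T := mul_div_cancel₀ T (by positivity)
  change τ * ∑ k ∈ Finset.Icc 1 m,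
    ‖(1 / τ) • (localAverage f τ k - localAverage f τ (k - 1))‖ ^ p ≤ _
  simp only [Finset.sum_Icc_one_eq_sum_range, Nat.add_sub_cancel]
  set W : ℕ → ℝ := fun j => ∫ t in ((j - 1 : ℕ) : ℝ) * τ..((j + 1 : ℕ) : ℝ) * τ, ‖g t‖ ^ p
  have hwindows : ∑ j ∈ Finset.range m, W j ≤ 2 * ∫ t in (0 : ℝ)..T, ‖g t‖ ^ p := by
    rw [← hmτ] at hgp ⊢
    exact sum_intervalIntegral_window_le (fun t => by positivity) hτ.le m hgp
  calc τ * ∑ j ∈ Finset.range m, ‖(1 / τ) • (localAverage f τ (j + 1) - localAverage f τ j)‖ ^ p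
      ≤ τ * ∑ j ∈ Finset.range m, 2 ^ (p - 1) * (1 / τ * W j) := by
        gcongr with j hj
        exact rpow_norm_smul_localAverage_succ_sub_le hp hg hgp hf hτ j
          (by rw [← hmτ]; gcongr; exact_mod_cast Finset.mem_range.1 hj)
    _ = 2 ^ (p - 1) * ∑ j ∈ Finset.range m, W j := by
        rw [← Finset.mul_sum, ← Finset.mul_sum]
        field_simp
    _ ≤ 2 ^ (p - 1) * (2 * ∫ t in (0 : ℝ)..T, ‖g t‖ ^ p) := by gcongr
    _ = 2 ^ p * ∫ t in (0 : ℝ)..T, ‖g t‖ ^ p := by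
        rw [← mul_assoc, ← Real.rpow_add_one two_ne_zero, sub_add_cancel]
end
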